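/- arXiv:1702.04536 — 5 statements merged into one kernel-verified Lean document; each statement's English description precedes it below -/
import Mathlib

section
/- Let w_i, w_{i+1}, w̄_{i+1} ∈ ℝ^m be vectors with w_i = w_{i+1} + w̄_{i+1}. Let F ⊆ ℝ^m be a set of feasible solutions, and suppose x_i ∈ F satisfies: for all x* ∈ F, x*·w_{i+1} ≤ p·(x_i·w_{i+1}) and x*·w̄_{i+1} ≤ p·(x_i·w̄_{i+1}). Then for all x* ∈ F, x*·w_i ≤ p·(x_i·w_i). -/
/-- The local-ratio theorem for maximization problems: if `x_i` is a
`p`-approximation with respect to both `w'` (the reduced weights) and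
`wbar` (the residual weights), and `w = w' + wbar`, then `x_i` is a
`p`-approximation with respect to `w`. -/
theorem local_ratio_theorem (m : ℕ) (p : ℝ)
    (w w' wbar : Fin m → ℝ)
    (hsplit : ∀ j, w j = w' j + wbar j)
    (F : Set (Fin m → ℝ)) (xi : Fin m → ℝ) (hxi : xi ∈ F)
    (h1 : ∀ x ∈ F, ∑ j, x j * w' j ≤ p * ∑ j, xi j * w' j)
    (h2 : ∀ x ∈ F, ∑ j, x j * wbar j ≤ p * ∑ j, xi j * wbar j) :
    ∀ x ∈ F, ∑ j, x j * w j ≤ p * ∑ j, xi j * w j := by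
  intro x hx
  have e : ∀ y : Fin m → ℝ, ∑ j, y j * w j = (∑ j, y j * w' j) + ∑ j, y j * wbar j := by
    intro y
    rw [← Finset.sum_add_distrib]
    exact Finset.sum_congr rfl fun j _ => by rw [hsplit j]; ring
  rw [e x, e xi, mul_add]
  exact add_le_add (h1 x hx) (h2 x hx)
end

section
/- Let G = (V,E) be a graph, e ∈ E an edge, α ≥ 1 and c > 0. Define a weight function w̄ on edges by: w̄[e] = c; for each edge e' sharing exactly one endpoint with e, w̄[e'] ∈ {c, α·c}; and w̄[e'] = 0 for all other edges. If M is a matching containing some edge of N⁺(e) (i.e., e itself or a neighbor of e), then for every matching M*, w̄(M*) ≤ 2α · w̄(M). -/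
/-- Lemma 3.2: if the residual weight function `w` assigns `c` to the edge `e`,
either `c` or `α·c` to each neighboring edge (sharing exactly one endpoint with
`e`), and `0` to every other edge, then any matching `M` containing some edge
of `N⁺(e)` is a `2α`-approximation with respect to `w`. Edges are modelled as
2-element vertex sets; matchings are sets of pairwise disjoint edges. -/
theorem residual_two_alpha_approx {V : Type*} [DecidableEq V]
    (E : Finset (Finset V)) (hE : ∀ e ∈ E, e.card = 2)
    (e : Finset V) (he : e ∈ E)
    (α c : ℝ) (hα : 1 ≤ α) (hc : 0 < c)
    (w : Finset V → ℝ)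
    (hwe : w e = c)
    (hN : ∀ e' ∈ E, (e ∩ e').card = 1 → w e' = c ∨ w e' = α * c)
    (hz : ∀ e' ∈ E, e' ≠ e → (e ∩ e').card ≠ 1 → w e' = 0)
    (M : Finset (Finset V)) (hMsub : M ⊆ E)
    (hM : ∀ a ∈ M, ∀ b ∈ M, a ≠ b → a ∩ b = ∅)
    (hMe : ∃ e' ∈ M, e' = e ∨ (e ∩ e').card = 1)
    (M' : Finset (Finset V)) (hM'sub : M' ⊆ E)
    (hM' : ∀ a ∈ M', ∀ b ∈ M', a ≠ b → a ∩ b = ∅) :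
    ∑ f ∈ M', w f ≤ 2 * α * ∑ f ∈ M, w f := by
  classical
  have hec : e.card = 2 := hE e he
  have hub : ∀ f ∈ E, w f ≤ α * c := by
    intro f hf
    by_cases hfe : f = e
    · subst hfe; rw [hwe]; nlinarith
    by_cases h1 : (e ∩ f).card = 1
    · rcases hN f hf h1 with h | h <;> rw [h] <;> nlinarith
    · rw [hz f hf hfe h1]; nlinarith
  have hnn : ∀ f ∈ E, 0 ≤ w f := by
    intro f hf
    by_cases hfe : f = e
    · subst hfe; rw [hwe]; linarith
    by_cases h1 : (e ∩ f).card = 1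
    · rcases hN f hf h1 with h | h <;> rw [h] <;> nlinarith
    · rw [hz f hf hfe h1]
  obtain ⟨e0, he0M, he0⟩ := hMe
  have hwc : c ≤ w e0 := by
    rcases he0 with rfl | h1
    · rw [hwe]
    · rcases hN e0 (hMsub he0M) h1 with h | h <;> rw [h] <;> nlinarith
  have hMge : c ≤ ∑ f ∈ M, w f :=
    le_trans hwc (Finset.single_le_sum (fun f hf => hnn f (hMsub hf)) he0M)
  set S := M'.filter (fun f => w f ≠ 0) with hSdef
  have hsum : ∑ f ∈ M', w f = ∑ f ∈ S, w f :=
    (Finset.sum_filter_ne_zero M').symm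
  have hone : ∀ f ∈ S, 1 ≤ (e ∩ f).card := by
    intro f hf
    rw [hSdef, Finset.mem_filter] at hf
    obtain ⟨hfM, hfw⟩ := hf
    by_cases hfe : f = e
    · subst hfe; simp [hec]
    by_cases h1 : (e ∩ f).card = 1
    · omega
    · exact absurd (hz f (hM'sub hfM) hfe h1) hfw
  have hcard : S.card ≤ 2 := by
    have h1 : S.card ≤ ∑ f ∈ S, (e ∩ f).card := by
      calc S.card = ∑ _f ∈ S, 1 := by simp
      _ ≤ _ := Finset.sum_le_sum hone
    have h2 : ∑ f ∈ S, (e ∩ f).card = (S.biUnion (fun f => e ∩ f)).card := by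
      rw [Finset.card_biUnion]
      intro x hx y hy hxy
      have hxM : x ∈ M' := (Finset.mem_filter.mp hx).1
      have hyM : y ∈ M' := (Finset.mem_filter.mp hy).1
      have hd := hM' x hxM y hyM hxy
      refine Finset.disjoint_left.mpr fun v hv hv' => ?_
      have hvx : v ∈ x := (Finset.mem_inter.mp hv).2
      have hvy : v ∈ y := (Finset.mem_inter.mp hv').2
      have : v ∈ x ∩ y := Finset.mem_inter.mpr ⟨hvx, hvy⟩
      rw [hd] at this
      exact absurd this (Finset.notMem_empty v)
    have h3 : S.biUnion (fun f => e ∩ f) ⊆ e := by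
      intro v hv
      obtain ⟨f, _, hvf⟩ := Finset.mem_biUnion.mp hv
      exact (Finset.mem_inter.mp hvf).1
    calc S.card ≤ _ := h1
    _ = _ := h2
    _ ≤ e.card := Finset.card_le_card h3
    _ = 2 := hec
  have hSle : ∑ f ∈ S, w f ≤ (S.card : ℝ) * (α * c) := by
    calc ∑ f ∈ S, w f ≤ ∑ _f ∈ S, (α * c) :=
          Finset.sum_le_sum fun f hf => hub f (hM'sub (Finset.mem_filter.mp hf).1)
    _ = (S.card : ℝ) * (α * c) := by rw [Finset.sum_const, nsmul_eq_mul]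
  have hc2 : (S.card : ℝ) ≤ 2 := by exact_mod_cast hcard
  have hαc : 0 < α * c := by nlinarith
  calc ∑ f ∈ M', w f = ∑ f ∈ S, w f := hsum
  _ ≤ (S.card : ℝ) * (α * c) := hSle
  _ ≤ 2 * (α * c) := by nlinarith
  _ ≤ 2 * α * ∑ f ∈ M, w f := by nlinarith
end

section
/- Let w_i = w_{i+1} + w̄_{i+1} be weight vectors on the edges of a graph with w_{i+1}[e] ≤ w_i[e] for all edges e, and let p, β > 0. Suppose x_{i+1} is a matching such that every matching x* satisfies x*·w_{i+1} ≤ β·(x_{i+1}·w_{i+1}), and also every matching x* satisfies p·(x*·w̄_{i+1}) ≤ x_{i+1}·w_{i+1}. Then every matching x* satisfies x*·w_i ≤ (β + 1/p)·(x_{i+1}·w_i). -/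
/-- Lemma 3.3 (residual omission): let `w = w' + wbar` with `w' ≤ w` pointwise.
If the matching `x` is a `β`-approximation for `w'` and its value `x·w'` is at
least `p` times the weight of any matching in `wbar`, then `x` is a
`(β + 1/p)`-approximation for `w`. Edges are 2-element vertex sets and
matchings are sets of pairwise disjoint edges in `E`. -/
theorem residual_omission {V : Type*} [DecidableEq V]
    (E : Finset (Finset V)) (hE : ∀ e ∈ E, e.card = 2)
    (w w' wbar : Finset V → ℝ)
    (hsplit : ∀ f ∈ E, w f = w' f + wbar f)
    (hmono : ∀ f ∈ E, w' f ≤ w f)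
    (p β : ℝ) (hp : 0 < p) (hβ : 0 < β)
    (x : Finset (Finset V)) (hxsub : x ⊆ E)
    (hx : ∀ a ∈ x, ∀ b ∈ x, a ≠ b → a ∩ b = ∅)
    (happrox : ∀ y : Finset (Finset V), y ⊆ E →
      (∀ a ∈ y, ∀ b ∈ y, a ≠ b → a ∩ b = ∅) →
      ∑ f ∈ y, w' f ≤ β * ∑ f ∈ x, w' f)
    (hresid : ∀ y : Finset (Finset V), y ⊆ E →
      (∀ a ∈ y, ∀ b ∈ y, a ≠ b → a ∩ b = ∅) →
      p * ∑ f ∈ y, wbar f ≤ ∑ f ∈ x, w' f) :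
    ∀ y : Finset (Finset V), y ⊆ E →
      (∀ a ∈ y, ∀ b ∈ y, a ≠ b → a ∩ b = ∅) →
      ∑ f ∈ y, w f ≤ (β + 1 / p) * ∑ f ∈ x, w f := by
  intro y hysub hy
  have h1 : ∑ f ∈ y, w f = ∑ f ∈ y, w' f + ∑ f ∈ y, wbar f := by
    rw [← Finset.sum_add_distrib]
    exact Finset.sum_congr rfl fun f hf => hsplit f (hysub hf)
  have h2 : ∑ f ∈ y, w' f ≤ β * ∑ f ∈ x, w' f := happrox y hysub hy
  have h3 : ∑ f ∈ y, wbar f ≤ (1 / p) * ∑ f ∈ x, w' f := by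
    have := hresid y hysub hy
    rw [div_mul_eq_mul_div, le_div_iff₀ hp, mul_comm]
    linarith
  have h4 : ∑ f ∈ x, w' f ≤ ∑ f ∈ x, w f :=
    Finset.sum_le_sum fun f hf => hmono f (hxsub hf)
  have hpos : 0 < β + 1 / p := by positivity
  nlinarith [mul_le_mul_of_nonneg_left h4 hpos.le]
end

section
/- Let n ≥ 1 be a natural number and ε > 0 real. Set α = √(1 + ε/2) and γ = n²/ln α. Then for every natural number k ≤ n², 2α(1 + 1/γ)^k ≤ 2 + ε. -/
/-- The final approximation factor bound: with `α = √(1 + ε/2)` and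
`γ = n²/ln α`, for every `k ≤ n²` we have `2α(1 + 1/γ)^k ≤ 2 + ε`. -/
theorem beta_one_le (n : ℕ) (hn : 1 ≤ n) (ε : ℝ) (hε : 0 < ε)
    (k : ℕ) (hk : k ≤ n ^ 2) :
    2 * Real.sqrt (1 + ε / 2) *
      (1 + 1 / ((n : ℝ) ^ 2 / Real.log (Real.sqrt (1 + ε / 2)))) ^ k ≤
    2 + ε := by
  set α := Real.sqrt (1 + ε / 2) with hα
  have h1 : (1:ℝ) < 1 + ε / 2 := by linarith
  have hαpos : 0 < α := Real.sqrt_pos.2 (by linarith)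
  have hα1 : 1 < α := by
    rw [hα]
    exact (Real.lt_sqrt (by norm_num)).2 (by linarith)
  have hL : 0 < Real.log α := Real.log_pos hα1
  set L := Real.log α with hLdef
  have hnpos : (0:ℝ) < (n:ℝ) ^ 2 := by positivity
  have hbase : 1 + 1 / ((n : ℝ) ^ 2 / L) = 1 + L / (n:ℝ) ^ 2 := by
    rw [one_div_div]
  have hb0 : (0:ℝ) ≤ 1 + L / (n:ℝ) ^ 2 := by positivity
  have hpow : (1 + L / (n:ℝ) ^ 2) ^ k ≤ α := by
    have h2 : 1 + L / (n:ℝ) ^ 2 ≤ Real.exp (L / (n:ℝ) ^ 2) := by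
      have := Real.add_one_le_exp (L / (n:ℝ) ^ 2)
      linarith
    calc (1 + L / (n:ℝ) ^ 2) ^ k ≤ Real.exp (L / (n:ℝ) ^ 2) ^ k :=
          pow_le_pow_left₀ hb0 h2 k
      _ = Real.exp (k * (L / (n:ℝ) ^ 2)) := by
          rw [← Real.exp_nat_mul]
      _ ≤ Real.exp L := by
          apply Real.exp_le_exp.2
          have hk' : (k:ℝ) ≤ (n:ℝ) ^ 2 := by exact_mod_cast hk
          calc (k:ℝ) * (L / (n:ℝ) ^ 2) ≤ (n:ℝ) ^ 2 * (L / (n:ℝ) ^ 2) := by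
                apply mul_le_mul_of_nonneg_right hk' (by positivity)
            _ = L := by field_simp
      _ = α := Real.exp_log hαpos
  have hsq : α * α = 1 + ε / 2 := Real.mul_self_sqrt (by linarith)
  calc 2 * α * (1 + 1 / ((n : ℝ) ^ 2 / L)) ^ k
      = 2 * α * (1 + L / (n:ℝ) ^ 2) ^ k := by rw [hbase]
    _ ≤ 2 * α * α := by
        apply mul_le_mul_of_nonneg_left hpow (by positivity)
    _ = 2 + ε := by rw [mul_assoc, hsq]; ring
end

section
/- For matchings, greedy stack-unwinding on weights reduced by the local-ratio rule yields a 2-approximation: the matching x₁ output by Algorithm MWM-simple satisfies x*·w ≤ 2·(x₁·w) for every matching x*. -/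
/-- Algorithm MWM-simple is a 2-approximation. The stack contains edges
`e 1, …, e k`; pushing `e i` (of nonnegative current weight) subtracts
`w i (e i)` from `e i` and all edges sharing an endpoint with it, producing
`w (i+1)`; when the loop ends no edge has positive weight. Unwinding the
stack greedily (`x (k+1) = ∅`, and `e i` is added to `x (i+1)` iff it is
disjoint from every edge already added) produces a matching `x 1` whose
weight under the original nonnegative weights `w 1` is at least half that of
any matching. -/
theorem mwm_simple_two_approx {V : Type*} [DecidableEq V]
    (E : Finset (Finset V)) (hE : ∀ f ∈ E, f.card = 2)
    (k : ℕ) (e : ℕ → Finset V)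
    (w : ℕ → Finset V → ℝ) (x : ℕ → Finset (Finset V))
    (hw1 : ∀ f ∈ E, 0 ≤ w 1 f)
    (heE : ∀ i, 1 ≤ i → i ≤ k → e i ∈ E)
    (hpos : ∀ i, 1 ≤ i → i ≤ k → 0 ≤ w i (e i))
    (hred : ∀ i, 1 ≤ i → i ≤ k → ∀ f ∈ E,
      w (i+1) f = if f = e i ∨ (f ∩ e i).card = 1 then w i f - w i (e i) else w i f)
    (hdone : ∀ f ∈ E, w (k+1) f ≤ 0)
    (hxinit : x (k+1) = ∅)
    (hgreedy : ∀ i, 1 ≤ i → i ≤ k →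
      (((∀ g ∈ x (i+1), g ∩ e i = ∅) ∧ x i = insert (e i) (x (i+1))) ∨
       ((∃ g ∈ x (i+1), (g ∩ e i).Nonempty) ∧ x i = x (i+1)))) :
    (x 1 ⊆ E ∧ ∀ a ∈ x 1, ∀ b ∈ x 1, a ≠ b → a ∩ b = ∅) ∧
    ∀ M : Finset (Finset V), M ⊆ E →
      (∀ a ∈ M, ∀ b ∈ M, a ≠ b → a ∩ b = ∅) →
      ∑ f ∈ M, w 1 f ≤ 2 * ∑ f ∈ x 1, w 1 f := by
  classical
  suffices H : ∀ j, j ≤ k →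
      ((x (k+1-j) ⊆ E ∧ ∀ a ∈ x (k+1-j), ∀ b ∈ x (k+1-j), a ≠ b → a ∩ b = ∅) ∧
       ∀ M : Finset (Finset V), M ⊆ E →
         (∀ a ∈ M, ∀ b ∈ M, a ≠ b → a ∩ b = ∅) →
         ∑ f ∈ M, w (k+1-j) f ≤ 2 * ∑ f ∈ x (k+1-j), w (k+1-j) f) by
    have h1 := H k le_rfl
    have hk1 : k + 1 - k = 1 := by omega
    rw [hk1] at h1
    exact h1
  intro j
  induction j with
  | zero =>
    intro _
    simp only [Nat.sub_zero]
    refine ⟨⟨?_, ?_⟩, ?_⟩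
    · rw [hxinit]; exact Finset.empty_subset _
    · rw [hxinit]; intro a ha; simp at ha
    · intro M hME hM
      rw [hxinit]
      simp only [Finset.sum_empty, mul_zero]
      exact Finset.sum_nonpos fun f hf => hdone f (hME hf)
  | succ j ih =>
    intro hj
    have ih' := ih (by omega)
    set i := k - j with hidef
    have hi1 : 1 ≤ i := by omega
    have hik : i ≤ k := by omega
    have heq : k + 1 - (j + 1) = i := by omega
    have heq2 : k + 1 - j = i + 1 := by omega
    rw [heq]
    rw [heq2] at ih'
    obtain ⟨⟨hsub, hmat⟩, hbound⟩ := ih'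
    have heik : e i ∈ E := heE i hi1 hik
    have hcard2 : (e i).card = 2 := hE _ heik
    have heine : (e i).Nonempty := by rw [← Finset.card_pos, hcard2]; norm_num
    have hwpos : 0 ≤ w i (e i) := hpos i hi1 hik
    -- count lemma
    have hcount : ∀ M : Finset (Finset V), M ⊆ E →
        (∀ a ∈ M, ∀ b ∈ M, a ≠ b → a ∩ b = ∅) →
        (M.filter (fun f => f = e i ∨ (f ∩ e i).card = 1)).card ≤ 2 := by
      intro M hME hM
      obtain ⟨v0, hv0⟩ := heine
      have hnon : ∀ f ∈ M.filter (fun f => f = e i ∨ (f ∩ e i).card = 1),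
          (f ∩ e i).Nonempty := by
        intro f hf
        rw [Finset.mem_filter] at hf
        rcases hf.2 with h | h
        · rw [h, Finset.inter_self]; exact ⟨v0, hv0⟩
        · rw [← Finset.card_pos, h]; norm_num
      set φ : Finset V → V := fun f =>
        if h : (f ∩ e i).Nonempty then h.choose else v0 with hφ
      have hφmem : ∀ f, (f ∩ e i).Nonempty → φ f ∈ f ∩ e i := by
        intro f h
        simp only [hφ, dif_pos h]
        exact h.choose_spec
      calc (M.filter (fun f => f = e i ∨ (f ∩ e i).card = 1)).card
          ≤ (e i).card := by
            apply Finset.card_le_card_of_injOn φ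
            · intro f hf
              exact (Finset.mem_inter.mp (hφmem f (hnon f hf))).2
            · intro f1 h1 f2 h2 hφeq
              by_contra hne
              have hd := hM f1 (Finset.mem_of_mem_filter _ h1)
                f2 (Finset.mem_of_mem_filter _ h2) hne
              have m1 := (Finset.mem_inter.mp (hφmem f1 (hnon f1 h1))).1
              have m2 := (Finset.mem_inter.mp (hφmem f2 (hnon f2 h2))).1
              rw [hφeq] at m1
              have : φ f2 ∈ f1 ∩ f2 := Finset.mem_inter.mpr ⟨m1, m2⟩
              rw [hd] at this
              exact absurd this (Finset.notMem_empty _)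
        _ = 2 := hcard2
    -- sum split lemma
    have hsplit : ∀ M : Finset (Finset V), M ⊆ E →
        ∑ f ∈ M, w i f = ∑ f ∈ M, w (i+1) f +
          ((M.filter (fun f => f = e i ∨ (f ∩ e i).card = 1)).card : ℝ) * w i (e i) := by
      intro M hME
      have hcong : ∀ f ∈ M, w i f = w (i+1) f +
          (if f = e i ∨ (f ∩ e i).card = 1 then w i (e i) else 0) := by
        intro f hf
        rw [hred i hi1 hik f (hME hf)]
        split <;> ring
      rw [Finset.sum_congr rfl hcong, Finset.sum_add_distrib]
      congr 1
      rw [← Finset.sum_filter, Finset.sum_const, nsmul_eq_mul]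
    rcases hgreedy i hi1 hik with ⟨hdisj, hxi⟩ | ⟨⟨g, hg, hgne⟩, hxi⟩
    · -- e i added
      have heni : e i ∉ x (i+1) := by
        intro hmem
        have := hdisj (e i) hmem
        rw [Finset.inter_self] at this
        rw [this] at heine
        exact absurd heine (by simp)
      have hsame : ∀ f ∈ x (i+1), w (i+1) f = w i f := by
        intro f hf
        rw [hred i hi1 hik f (hsub hf), if_neg]
        push_neg
        constructor
        · intro hfe
          have := hdisj f hf
          rw [hfe, Finset.inter_self] at this
          rw [this] at heine
          exact absurd heine (by simp)
        · rw [hdisj f hf]; simp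
      refine ⟨⟨?_, ?_⟩, ?_⟩
      · rw [hxi]
        intro a ha
        rcases Finset.mem_insert.mp ha with h | h
        · rw [h]; exact heik
        · exact hsub h
      · rw [hxi]
        intro a ha b hb hab
        rcases Finset.mem_insert.mp ha with h | h <;>
          rcases Finset.mem_insert.mp hb with h' | h'
        · exact absurd (h.trans h'.symm) hab
        · rw [h, Finset.inter_comm]; exact hdisj b h'
        · rw [h']; exact hdisj a h
        · exact hmat a h b h' hab
      · intro M hME hM
        have hb := hbound M hME hM
        have hc := hcount M hME hM
        have hs := hsplit M hME
        have hx1 : ∑ f ∈ x i, w i f = w i (e i) + ∑ f ∈ x (i+1), w (i+1) f := by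
          rw [hxi, Finset.sum_insert heni]
          congr 1
          exact (Finset.sum_congr rfl hsame).symm
        rw [hs, hx1]
        have hcle : ((M.filter (fun f => f = e i ∨ (f ∩ e i).card = 1)).card : ℝ) ≤ 2 := by
          exact_mod_cast hc
        nlinarith [hb, hwpos, hcle]
    · -- e i skipped
      have hgE : g ∈ E := hsub hg
      have hgconf : g = e i ∨ (g ∩ e i).card = 1 := by
        by_cases hge : g = e i
        · exact Or.inl hge
        · right
          have hsub' : g ∩ e i ⊆ e i := Finset.inter_subset_right
          have hle : (g ∩ e i).card ≤ 2 := by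
            calc (g ∩ e i).card ≤ (e i).card := Finset.card_le_card hsub'
            _ = 2 := hcard2
          have hpos' : 1 ≤ (g ∩ e i).card := Finset.card_pos.mpr hgne
          interval_cases h : (g ∩ e i).card
          · rfl
          · exfalso
            have : g ∩ e i = e i := Finset.eq_of_subset_of_card_le hsub' (by rw [h, hcard2])
            have hsubg : e i ⊆ g := by rw [← this]; exact Finset.inter_subset_left
            exact hge (Finset.eq_of_subset_of_card_le
              (by rw [← this]; exact Finset.inter_subset_left) (by rw [hE g hgE, hcard2])).symm
      have hc1 : 1 ≤ ((x (i+1)).filter (fun f => f = e i ∨ (f ∩ e i).card = 1)).card := by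
        apply Finset.card_pos.mpr
        exact ⟨g, Finset.mem_filter.mpr ⟨hg, hgconf⟩⟩
      refine ⟨⟨by rw [hxi]; exact hsub, by rw [hxi]; exact hmat⟩, ?_⟩
      intro M hME hM
      have hb := hbound M hME hM
      have hc := hcount M hME hM
      have hsM := hsplit M hME
      have hsx := hsplit (x (i+1)) hsub
      rw [hxi, hsM, hsx]
      have hcle : ((M.filter (fun f => f = e i ∨ (f ∩ e i).card = 1)).card : ℝ) ≤ 2 := by
        exact_mod_cast hc
      have hc1' : (1 : ℝ) ≤ ((x (i+1)).filter (fun f => f = e i ∨ (f ∩ e i).card = 1)).card := by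
        exact_mod_cast hc1
      nlinarith [hb, hwpos, hcle, hc1']
end
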